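/- arXiv:1910.10572 — 5 statements merged into one kernel-verified Lean document; each statement's English description precedes it below -/
import Mathlib

section
/- Let I be an open interval in ℝ and X a subset of I. Then X is a finite union of open intervals and singletons if and only if the intersection of the topological boundary of X with I is finite. -/
/-!
A finite union of open intervals and points has finitely many boundary points, since the
frontier of a union lies in the union of the frontiers. Conversely, induct on a finite set `F`
containing `frontier X ∩ I`. If `F = ∅`, then `X` is relatively clopen in the connected set `I`,
so `X = ∅` or `X = I`. Otherwise cut `I` at a point `a ∈ F`: on either side of `a` the frontier
of `X` inside the smaller interval avoids `a`, and `X` is the union of its two halves and of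
`X ∩ {a}`.
-/

/-- A set is an open interval of ℝ (possibly unbounded). -/
def IsOpenIntervalR (s : Set ℝ) : Prop :=
  (∃ a b : ℝ, s = Set.Ioo a b) ∨ (∃ a : ℝ, s = Set.Ioi a) ∨
    (∃ b : ℝ, s = Set.Iio b) ∨ s = Set.univ

open Set

def IsFiniteUnionOf {α : Type*} (P : Set α → Prop) (X : Set α) : Prop :=
  ∃ S : Finset (Set α), (∀ s ∈ S, P s) ∧ X = ⋃₀ (S : Set (Set α))

namespace IsFiniteUnionOf

variable {α : Type*} {P : Set α → Prop} {X Y : Set α}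

lemma empty : IsFiniteUnionOf P ∅ :=
  ⟨∅, by simp, by simp⟩

lemma of_prop {s : Set α} (hs : P s) : IsFiniteUnionOf P s :=
  ⟨{s}, by simpa using hs, by simp⟩

lemma union (hX : IsFiniteUnionOf P X) (hY : IsFiniteUnionOf P Y) :
    IsFiniteUnionOf P (X ∪ Y) := by
  classical
  obtain ⟨S, hS, rfl⟩ := hX
  obtain ⟨T, hT, rfl⟩ := hY
  refine ⟨S ∪ T, fun s hs => ?_, by rw [Finset.coe_union, sUnion_union]⟩
  rcases Finset.mem_union.mp hs with hs | hs
  exacts [hS s hs, hT s hs]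

lemma inter_singleton (hP : ∀ a, P {a}) (X : Set α) (a : α) :
    IsFiniteUnionOf P (X ∩ {a}) := by
  by_cases ha : a ∈ X
  · rw [inter_singleton_of_mem ha]
    exact of_prop (hP a)
  · rw [inter_singleton_eq_empty.mpr ha]
    exact empty

lemma frontier_finite [TopologicalSpace α] (hP : ∀ s, P s → (frontier s).Finite)
    (hX : IsFiniteUnionOf P X) : (frontier X).Finite := by
  classical
  obtain ⟨S, hS, rfl⟩ := hX
  induction S using Finset.induction_on with
  | empty => simp
  | insert s T _ ih =>
    rw [Finset.coe_insert, sUnion_insert]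
    have hs : (frontier s).Finite := hP s (hS s (Finset.mem_insert_self s T))
    have hT := ih fun t ht => hS t (Finset.mem_insert_of_mem ht)
    exact (hs.union hT).subset (frontier_union_subset _ _ |>.trans
      (union_subset_union inter_subset_left inter_subset_right))

end IsFiniteUnionOf

lemma IsPreconnected.eq_empty_or_eq_of_frontier_inter_eq_empty {α : Type*} [TopologicalSpace α]
    {I X : Set α} (hI : IsPreconnected I) (hXI : X ⊆ I) (h : frontier X ∩ I = ∅) :
    X = ∅ ∨ X = I := by
  have hcover : I ⊆ interior X ∪ interior Xᶜ := by
    intro y hy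
    by_cases hyc : y ∈ closure X
    · left
      by_contra hyi
      exact eq_empty_iff_forall_notMem.mp h y ⟨⟨hyc, hyi⟩, hy⟩
    · right
      rwa [interior_compl]
  have hdisj : Disjoint (interior X) (interior Xᶜ) :=
    disjoint_compl_right.mono interior_subset interior_subset
  rcases hI.subset_or_subset isOpen_interior isOpen_interior hdisj hcover with hX | hXc
  · exact Or.inr (hXI.antisymm fun y hy => interior_subset (hX hy))
  · exact Or.inl (eq_empty_of_forall_notMem fun y hy => interior_subset (hXc (hXI hy)) hy)

namespace IsOpenIntervalR

variable {s : Set ℝ}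

lemma isPreconnected (h : IsOpenIntervalR s) : IsPreconnected s := by
  rcases h with ⟨a, b, rfl⟩ | ⟨a, rfl⟩ | ⟨b, rfl⟩ | rfl
  exacts [isPreconnected_Ioo, isPreconnected_Ioi, isPreconnected_Iio, isPreconnected_univ]

lemma frontier_finite (h : IsOpenIntervalR s) : (frontier s).Finite := by
  rcases h with ⟨a, b, rfl⟩ | ⟨a, rfl⟩ | ⟨b, rfl⟩ | rfl
  · rcases lt_or_ge a b with hab | hba
    · rw [frontier_Ioo hab]
      exact toFinite _
    · rw [Ioo_eq_empty hba.not_gt, frontier_empty]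
      exact finite_empty
  · rw [frontier_Ioi]
    exact finite_singleton a
  · rw [frontier_Iio]
    exact finite_singleton b
  · rw [frontier_univ]
    exact finite_empty

lemma inter_Iio (h : IsOpenIntervalR s) (x : ℝ) : IsOpenIntervalR (s ∩ Iio x) := by
  rcases h with ⟨a, b, rfl⟩ | ⟨a, rfl⟩ | ⟨b, rfl⟩ | rfl
  · exact Or.inl ⟨a, min b x, Ioo_inter_Iio⟩
  · exact Or.inl ⟨a, x, Ioi_inter_Iio⟩
  · exact Or.inr (Or.inr (Or.inl ⟨min b x, Iio_inter_Iio⟩))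
  · exact Or.inr (Or.inr (Or.inl ⟨x, univ_inter _⟩))

lemma inter_Ioi (h : IsOpenIntervalR s) (x : ℝ) : IsOpenIntervalR (s ∩ Ioi x) := by
  rcases h with ⟨a, b, rfl⟩ | ⟨a, rfl⟩ | ⟨b, rfl⟩ | rfl
  · exact Or.inl ⟨max a x, b, Ioo_inter_Ioi⟩
  · exact Or.inr (Or.inl ⟨max a x, Ioi_inter_Ioi⟩)
  · exact Or.inl ⟨x, b, Iio_inter_Ioi⟩
  · exact Or.inr (Or.inl ⟨x, univ_inter _⟩)

end IsOpenIntervalR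

def IsOpenIntervalOrSingleton (s : Set ℝ) : Prop :=
  IsOpenIntervalR s ∨ ∃ x : ℝ, s = {x}

lemma IsOpenIntervalOrSingleton.frontier_finite {s : Set ℝ} (h : IsOpenIntervalOrSingleton s) :
    (frontier s).Finite := by
  rcases h with h | ⟨x, rfl⟩
  · exact h.frontier_finite
  · exact (finite_singleton x).subset (frontier_subset_closure.trans closure_singleton.subset)

lemma frontier_inter_inter_subset_of_notMem {α : Type*} [TopologicalSpace α]
    {X I J F : Set α} {a : α} (hJ : IsOpen J) (ha : a ∉ J) (h : frontier X ∩ I ⊆ insert a F) :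
    frontier (X ∩ J) ∩ (I ∩ J) ⊆ F := by
  rw [← inter_assoc, inter_right_comm, frontier_inter_open_inter hJ, inter_right_comm]
  rintro y ⟨hyXI, hyJ⟩
  exact (h hyXI).resolve_left fun hya => ha (hya ▸ hyJ)

lemma isFiniteUnionOf_of_frontier_inter_subset {F : Set ℝ} (hF : F.Finite) {I X : Set ℝ}
    (hI : IsOpenIntervalR I) (hXI : X ⊆ I) (h : frontier X ∩ I ⊆ F) :
    IsFiniteUnionOf IsOpenIntervalOrSingleton X := by
  induction F, hF using Set.Finite.induction_on generalizing I X with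
  | empty =>
    rcases hI.isPreconnected.eq_empty_or_eq_of_frontier_inter_eq_empty hXI
      (subset_empty_iff.mp h) with rfl | rfl
    · exact .empty
    · exact .of_prop (Or.inl hI)
  | @insert a F _ _ ih =>
    have hlt : IsFiniteUnionOf IsOpenIntervalOrSingleton (X ∩ Iio a) :=
      ih (hI.inter_Iio a) (inter_subset_inter_left _ hXI)
        (frontier_inter_inter_subset_of_notMem isOpen_Iio (lt_irrefl a) h)
    have hgt : IsFiniteUnionOf IsOpenIntervalOrSingleton (X ∩ Ioi a) :=
      ih (hI.inter_Ioi a) (inter_subset_inter_left _ hXI)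
        (frontier_inter_inter_subset_of_notMem isOpen_Ioi (lt_irrefl a) h)
    have hX : X = X ∩ Iio a ∪ X ∩ Ioi a ∪ X ∩ {a} := by
      rw [← inter_union_distrib_left, Iio_union_Ioi, ← sdiff_eq, sdiff_union_inter]
    rw [hX]
    exact (hlt.union hgt).union (.inter_singleton (fun x => Or.inr ⟨x, rfl⟩) X a)

theorem stmt0 (I X : Set ℝ) (hI : IsOpenIntervalR I) (hXI : X ⊆ I) :
    (∃ S : Finset (Set ℝ),
        (∀ s ∈ S, IsOpenIntervalR s ∨ ∃ x : ℝ, s = {x}) ∧ X = ⋃₀ (S : Set (Set ℝ))) ↔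
      (frontier X ∩ I).Finite := by
  change IsFiniteUnionOf IsOpenIntervalOrSingleton X ↔ _
  constructor
  · intro hX
    exact (hX.frontier_finite fun s hs => hs.frontier_finite).subset inter_subset_left
  · intro hfin
    exact isFiniteUnionOf_of_frontier_inter_subset hfin hI hXI subset_rfl
end

section
/- Let X be a nowhere dense subset of ℝ that is not closed-and-discrete, and let I be a bounded open interval with I ∩ X infinite. Let D be the set of lengths of the connected components of I \ Cl(X). Then D is infinite, bounded, discrete, and Cl(D) = D ∪ {0}. -/
/-!
The components of the open set `(a, b) \ closure X` are disjoint open intervals, so for every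
`ε > 0` only finitely many of them have length `≥ ε`: their lengths are positive and accumulate
at no point other than `0`, which makes `D` bounded and discrete with `closure D ⊆ D ∪ {0}`.
Since `(a, b) ∩ X` is infinite, it contains two points closer than any `ε`, and as `X` is
nowhere dense some component lies between them; so `0` is a limit of lengths, `0 ∈ closure D`,
and `D`, not being closed, is infinite.
-/

open Set Topology MeasureTheory Function

section OpenConnected

variable {α : Type*} [TopologicalSpace α]

theorem IsOpen.exists_mem_lt [LinearOrder α] [OrderTopology α] [DenselyOrdered α] [NoMinOrder α]
    {s : Set α} (hs : IsOpen s) {x : α} (hx : x ∈ s) : ∃ y ∈ s, y < x :=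
  ((eventually_nhdsWithin_of_eventually_nhds (hs.mem_nhds hx)).and
    (self_mem_nhdsWithin : ∀ᶠ y in 𝓝[<] x, y < x)).exists

theorem IsOpen.exists_mem_gt [LinearOrder α] [OrderTopology α] [DenselyOrdered α] [NoMaxOrder α]
    {s : Set α} (hs : IsOpen s) {x : α} (hx : x ∈ s) : ∃ y ∈ s, x < y :=
  ((eventually_nhdsWithin_of_eventually_nhds (hs.mem_nhds hx)).and
    (self_mem_nhdsWithin : ∀ᶠ y in 𝓝[>] x, x < y)).exists

theorem IsOpen.eq_Ioo_csInf_csSup [ConditionallyCompleteLinearOrder α] [OrderTopology α]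
    [DenselyOrdered α] [NoMinOrder α] [NoMaxOrder α] {s : Set α} (hs : IsOpen s)
    (hc : IsConnected s) (hb : BddBelow s) (ha : BddAbove s) : s = Ioo (sInf s) (sSup s) := by
  refine Subset.antisymm (fun x hx => ⟨?_, ?_⟩) (hc.Ioo_csInf_csSup_subset hb ha)
  · obtain ⟨y, hy, hyx⟩ := hs.exists_mem_lt hx
    exact (csInf_le hb hy).trans_lt hyx
  · obtain ⟨y, hy, hxy⟩ := hs.exists_mem_gt hx
    exact hxy.trans_le (le_csSup ha hy)

end OpenConnected

theorem IsOpen.connectedComponentIn_eq_Ioo {S : Set ℝ} (hS : IsOpen S) (hSb : Bornology.IsBounded S)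
    {y : ℝ} (hy : y ∈ S) :
    ∃ c d : ℝ, y ∈ Ioo c d ∧ connectedComponentIn S y = Ioo c d := by
  have hsub := connectedComponentIn_subset S y
  have hC := hS.connectedComponentIn.eq_Ioo_csInf_csSup (isConnected_connectedComponentIn_iff.2 hy)
    (hSb.subset hsub).bddBelow (hSb.subset hsub).bddAbove
  exact ⟨_, _, hC ▸ mem_connectedComponentIn hy, hC⟩

theorem Set.Infinite.exists_lt_lt_add {s : Set ℝ} (hs : s.Infinite) (hb : Bornology.IsBounded s)
    {ε : ℝ} (hε : 0 < ε) : ∃ u ∈ s, ∃ v ∈ s, u < v ∧ v < u + ε := by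
  obtain ⟨m, hm⟩ := hb.bddBelow
  obtain ⟨M, hM⟩ := hb.bddAbove
  have hmaps : MapsTo (fun x => ⌊x / ε⌋) s (Icc ⌊m / ε⌋ ⌊M / ε⌋) := fun x hx =>
    ⟨Int.floor_mono (div_le_div_of_nonneg_right (hm hx) hε.le),
      Int.floor_mono (div_le_div_of_nonneg_right (hM hx) hε.le)⟩
  obtain ⟨x, hx, y, hy, hne, hfloor⟩ := hs.exists_ne_map_eq_of_mapsTo hmaps (finite_Icc _ _)
  have hclose : |x - y| < ε := by
    have := Int.abs_sub_lt_one_of_floor_eq_floor hfloor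
    rwa [← sub_div, abs_div, abs_of_pos hε, div_lt_one hε] at this
  rcases hne.lt_or_gt with h | h
  · exact ⟨x, hx, y, hy, h, by linarith [neg_abs_le (x - y)]⟩
  · exact ⟨y, hy, x, hx, h, by linarith [le_abs_self (x - y)]⟩

def componentLengths (S : Set ℝ) : Set ℝ :=
  {l : ℝ | ∃ c d : ℝ, c < d ∧ l = d - c ∧ ∃ y ∈ Ioo c d, connectedComponentIn S y = Ioo c d}

section componentLengths

variable {S : Set ℝ}

theorem componentLengths_subset_Ioc {a b : ℝ} (hS : S ⊆ Ioo a b) :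
    componentLengths S ⊆ Ioc 0 (b - a) := by
  rintro l ⟨c, d, hcd, rfl, y, -, hC⟩
  have hsub : Ioo c d ⊆ Ioo a b := hC ▸ (connectedComponentIn_subset S y).trans hS
  obtain ⟨hac, hdb⟩ := (Ioo_subset_Ioo_iff hcd).1 hsub
  exact ⟨sub_pos.2 hcd, by linarith⟩

/-- Distinct components are disjoint, so their measures sum to at most `volume S`. -/
theorem finite_componentLengths_inter_Ici (hS : volume S ≠ ⊤) {ε : ℝ} (hε : 0 < ε) :
    (componentLengths S ∩ Ici ε).Finite := by
  let C : range (connectedComponentIn S) → Set ℝ := Subtype.val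
  have hdisj : Pairwise (Disjoint on C) := by
    rintro ⟨_, y₁, rfl⟩ ⟨_, y₂, rfl⟩ hne
    refine disjoint_left.2 fun z hz₁ hz₂ => hne ?_
    exact Subtype.ext ((connectedComponentIn_eq hz₁).trans (connectedComponentIn_eq hz₂).symm)
  have hmeas : ∀ i, MeasurableSet (C i) := by
    rintro ⟨_, y, rfl⟩
    exact isPreconnected_connectedComponentIn.ordConnected.measurableSet
  have hunion : volume (⋃ i, C i) ≠ ⊤ :=
    ne_top_of_le_ne_top hS (measure_mono (iUnion_subset fun ⟨_, y, rfl⟩ =>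
      connectedComponentIn_subset S y))
  refine ((Measure.finite_const_le_meas_of_disjoint_iUnion volume (ENNReal.ofReal_pos.2 hε)
    hmeas hdisj hunion).image fun i => (volume (C i)).toReal).subset ?_
  rintro l ⟨⟨c, d, hcd, rfl, y, -, hy⟩, hl⟩
  refine ⟨⟨_, y, rfl⟩, ?_, ?_⟩
  · simp only [mem_ofPred_eq, C, hy, Real.volume_Ioo]
    exact ENNReal.ofReal_le_ofReal hl
  · simp only [C, hy, Real.volume_Ioo]
    exact ENNReal.toReal_ofReal (sub_pos.2 hcd).le

theorem exists_mem_componentLengths_le (hS : IsOpen S) (hSb : Bornology.IsBounded S)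
    {u v w : ℝ} (hu : u ∉ S) (hv : v ∉ S) (hw : w ∈ S) (huw : u < w) (hwv : w < v) :
    ∃ l ∈ componentLengths S, l ≤ v - u := by
  obtain ⟨c, d, hwcd, hC⟩ := hS.connectedComponentIn_eq_Ioo hSb hw
  have hcdS : Ioo c d ⊆ S := hC ▸ connectedComponentIn_subset S w
  have huc : u ≤ c := not_lt.1 fun h => hu (hcdS ⟨h, huw.trans hwcd.2⟩)
  have hdv : d ≤ v := not_lt.1 fun h => hv (hcdS ⟨hwcd.1.trans hwv, h⟩)
  exact ⟨d - c, ⟨c, d, hwcd.1.trans hwcd.2, rfl, w, hwcd, hC⟩, by linarith⟩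

/-- Two points of `X` closer than `ε` enclose a gap of `closure X`, since `X` is nowhere dense. -/
theorem exists_mem_componentLengths_lt {X : Set ℝ} (hX : IsNowhereDense X) {a b : ℝ}
    (hinf : (Ioo a b ∩ X).Infinite) {ε : ℝ} (hε : 0 < ε) :
    ∃ l ∈ componentLengths (Ioo a b \ closure X), l < ε := by
  obtain ⟨u, ⟨hu, huX⟩, v, ⟨hv, hvX⟩, huv, hvu⟩ :=
    hinf.exists_lt_lt_add (Metric.isBounded_Ioo a b |>.subset inter_subset_left) hε
  have hgap : ¬ Ioo u v ⊆ closure X := fun h =>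
    (nonempty_Ioo.2 huv).ne_empty (subset_empty_iff.1 (hX ▸ interior_maximal h isOpen_Ioo))
  obtain ⟨w, hw, hwX⟩ := not_subset.1 hgap
  obtain ⟨l, hl, hlvu⟩ := exists_mem_componentLengths_le (isOpen_Ioo.sdiff isClosed_closure)
    (Metric.isBounded_Ioo a b |>.subset sdiff_subset) (fun h => h.2 (subset_closure huX))
    (fun h => h.2 (subset_closure hvX)) ⟨⟨hu.1.trans hw.1, hw.2.trans hv.2⟩, hwX⟩ hw.1 hw.2
  exact ⟨l, hl, by linarith⟩

end componentLengths

section FiniteAboveEachLevel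

variable {D : Set ℝ}

theorem exists_isOpen_inter_eq_singleton_of_finite_inter_Ici (hpos : ∀ l ∈ D, 0 < l)
    (hfin : ∀ ε > 0, (D ∩ Ici ε).Finite) {l : ℝ} (hl : l ∈ D) :
    ∃ U : Set ℝ, IsOpen U ∧ U ∩ D = {l} := by
  have hF : ((D ∩ Ici (l / 2)) \ {l}).Finite := (hfin _ (half_pos (hpos l hl))).sdiff
  refine ⟨Ioi (l / 2) \ ((D ∩ Ici (l / 2)) \ {l}), isOpen_Ioi.sdiff hF.isClosed, ?_⟩
  ext x
  simp only [mem_inter_iff, mem_sdiff, mem_Ioi, mem_Ici, mem_singleton_iff]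
  constructor
  · rintro ⟨⟨hx, hxF⟩, hxD⟩
    exact not_not.1 fun hne => hxF ⟨⟨hxD, hx.le⟩, hne⟩
  · rintro rfl
    exact ⟨⟨half_lt_self (hpos x hl), fun h => h.2 rfl⟩, hl⟩

theorem closure_eq_union_zero_of_finite_inter_Ici (hpos : ∀ l ∈ D, 0 < l)
    (hfin : ∀ ε > 0, (D ∩ Ici ε).Finite) (hsmall : ∀ ε > 0, ∃ l ∈ D, l < ε) :
    closure D = D ∪ {0} := by
  refine Subset.antisymm (fun x hx => ?_) (union_subset subset_closure ?_)
  · have hx₀ : 0 ≤ x := closure_minimal (fun l hl => (hpos l hl).le) isClosed_Ici hx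
    rcases hx₀.eq_or_lt with rfl | hx₀
    · exact Or.inr rfl
    have hsplit : D ⊆ D ∩ Ici (x / 2) ∪ Iic (x / 2) := fun l hl =>
      (le_or_gt (x / 2) l).imp (fun h => ⟨hl, h⟩) le_of_lt
    have := closure_minimal hsplit ((hfin _ (half_pos hx₀)).isClosed.union isClosed_Iic) hx
    exact Or.inl (this.resolve_right (not_le.2 (half_lt_self hx₀))).1
  · rw [singleton_subset_iff, Metric.mem_closure_iff]
    intro ε hε
    obtain ⟨l, hl, hlε⟩ := hsmall ε hε
    exact ⟨l, hl, by rwa [Real.dist_eq, zero_sub, abs_neg, abs_of_pos (hpos l hl)]⟩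

end FiniteAboveEachLevel

theorem stmt6_general (X : Set ℝ) (hnd : IsNowhereDense X)
    (a b : ℝ) (hinf : (Set.Ioo a b ∩ X).Infinite)
    (D : Set ℝ)
    (hD : D = {l : ℝ | ∃ c d : ℝ, c < d ∧ l = d - c ∧
      ∃ y ∈ Set.Ioo c d, connectedComponentIn (Set.Ioo a b \ closure X) y = Set.Ioo c d}) :
    D.Infinite ∧ Bornology.IsBounded D ∧
      (∀ l ∈ D, ∃ U : Set ℝ, IsOpen U ∧ U ∩ D = {l}) ∧
      closure D = D ∪ {0} := by
  change D = componentLengths (Ioo a b \ closure X) at hD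
  subst hD
  have hsub := componentLengths_subset_Ioc (sdiff_subset : Ioo a b \ closure X ⊆ Ioo a b)
  have hpos : ∀ l ∈ componentLengths (Ioo a b \ closure X), 0 < l := fun l hl => (hsub hl).1
  have hfin : ∀ ε > 0, (componentLengths (Ioo a b \ closure X) ∩ Ici ε).Finite := fun ε hε =>
    finite_componentLengths_inter_Ici
      (ne_top_of_le_ne_top measure_Ioo_lt_top.ne (measure_mono sdiff_subset)) hε
  have hclosure := closure_eq_union_zero_of_finite_inter_Ici hpos hfin
    fun ε hε => exists_mem_componentLengths_lt hnd hinf hε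
  refine ⟨fun hfinite => ?_, (Metric.isBounded_Ioc 0 (b - a)).subset hsub,
    fun l hl => exists_isOpen_inter_eq_singleton_of_finite_inter_Ici hpos hfin hl, hclosure⟩
  have h0 : (0 : ℝ) ∈ closure (componentLengths (Ioo a b \ closure X)) := hclosure ▸ Or.inr rfl
  exact (hpos 0 (hfinite.isClosed.closure_eq ▸ h0)).false

/-- Let `X ⊆ ℝ` be nowhere dense and not closed-and-discrete, and let
`I = (a,b)` be a bounded open interval with `I ∩ X` infinite.  Let `D` be the
set of lengths of the connected components of `I \ Cl(X)`.  Then `D` is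
infinite, bounded, discrete, and `Cl(D) = D ∪ {0}`. -/
theorem stmt6 (X : Set ℝ) (hnd : IsNowhereDense X)
    (hncd : ¬ (IsClosed X ∧ ∀ x ∈ X, ∃ U : Set ℝ, IsOpen U ∧ U ∩ X = {x}))
    (a b : ℝ) (hab : a < b) (hinf : (Set.Ioo a b ∩ X).Infinite)
    (D : Set ℝ)
    (hD : D = {l : ℝ | ∃ c d : ℝ, c < d ∧ l = d - c ∧
      ∃ y ∈ Set.Ioo c d, connectedComponentIn (Set.Ioo a b \ closure X) y = Set.Ioo c d}) :
    D.Infinite ∧ Bornology.IsBounded D ∧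
      (∀ l ∈ D, ∃ U : Set ℝ, IsOpen U ∧ U ∩ D = {l}) ∧
      closure D = D ∪ {0} :=
  stmt6_general X hnd a b hinf D hD
end

section
/- The set {1/n^k : n ≥ 1} (for fixed integer k ≥ 1) is a nowhere dense subset of ℝ that is not porous. -/
open Set Filter

lemma aux_pow (j : ℕ) (x : ℝ) (hx : 0 ≤ x) :
    (x + 1) ^ (j + 1) ≤ x ^ (j + 1) + (j + 1) * (x + 1) ^ j := by
  induction j with
  | zero => simp
  | succ j ih =>
    have h2 : x ^ (j + 1) ≤ (x + 1) ^ (j + 1) :=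
      pow_le_pow_left₀ hx (by linarith) _
    have hx1 : (0:ℝ) ≤ x + 1 := by linarith
    calc (x + 1) ^ (j + 2) = (x + 1) ^ (j + 1) * (x + 1) := by ring
      _ ≤ (x ^ (j + 1) + (j + 1) * (x + 1) ^ j) * (x + 1) := by
          apply mul_le_mul_of_nonneg_right ih hx1
      _ = x ^ (j + 2) + x ^ (j + 1) + (j + 1) * (x + 1) ^ (j + 1) := by push_cast; ring
      _ ≤ x ^ (j + 2) + ((j:ℝ) + 1 + 1) * (x + 1) ^ (j + 1) := by nlinarith
      _ = x ^ (j + 2) + (↑(j + 1) + 1) * (x + 1) ^ (j + 1) := by push_cast; ring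

set_option maxHeartbeats 1000000 in
/-- For a fixed integer `k ≥ 1`, the set `{1/n^k : n ≥ 1}` is a nowhere dense
subset of ℝ which is not porous:  there is no `δ > 0` such that for all `p` and
`r > 0` some interval `(q - δr, q + δr)` is contained in `(p - r, p + r)`
and misses the set. -/
theorem stmt8 (k : ℕ) (hk : 1 ≤ k) :
    IsNowhereDense {x : ℝ | ∃ n : ℕ, 1 ≤ n ∧ x = 1 / (n : ℝ) ^ k} ∧
      ¬ ∃ δ : ℝ, 0 < δ ∧ ∀ p r : ℝ, 0 < r → ∃ q : ℝ,
        Set.Ioo (q - δ * r) (q + δ * r) ⊆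
          Set.Ioo (p - r) (p + r) \ {x : ℝ | ∃ n : ℕ, 1 ≤ n ∧ x = 1 / (n : ℝ) ^ k} := by
  constructor
  · set S : Set ℝ := {x : ℝ | ∃ n : ℕ, 1 ≤ n ∧ x = 1 / (n : ℝ) ^ k} with hSdef
    have hrange : S = Set.range (fun n : ℕ => 1 / ((n : ℝ) + 1) ^ k) := by
      ext x
      constructor
      · rintro ⟨n, hn, rfl⟩
        refine ⟨n - 1, ?_⟩
        simp only []
        rw [Nat.cast_sub hn]
        push_cast; ring_nf
      · rintro ⟨n, rfl⟩
        exact ⟨n + 1, by simp, by push_cast; ring_nf⟩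
    have htend : Tendsto (fun n : ℕ => 1 / ((n : ℝ) + 1) ^ k) atTop (nhds 0) := by
      simp only [one_div]
      apply Tendsto.inv_tendsto_atTop
      exact (tendsto_pow_atTop (by omega)).comp (tendsto_atTop_add_const_right _ 1 tendsto_natCast_atTop_atTop)
    have hcpt : IsCompact (insert (0:ℝ) (Set.range fun n : ℕ => 1 / ((n : ℝ) + 1) ^ k)) :=
      htend.isCompact_insert_range
    have hclos : closure S ⊆ insert 0 (Set.range fun n : ℕ => 1 / ((n : ℝ) + 1) ^ k) := by
      rw [hrange]
      exact closure_minimal (subset_insert _ _) hcpt.isClosed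
    have hcount : (insert (0:ℝ) (Set.range fun n : ℕ => 1 / ((n : ℝ) + 1) ^ k)).Countable :=
      (countable_range _).insert 0
    rw [IsNowhereDense]
    have : interior (closure S) ⊆ interior (insert 0 (Set.range fun n : ℕ => 1 / ((n : ℝ) + 1) ^ k)) :=
      interior_mono hclos
    rw [interior_eq_empty_iff_dense_compl.2 (hcount.dense_compl ℝ)] at this
    exact subset_eq_empty this rfl
  · rintro ⟨δ, hδ, h⟩
    set S : Set ℝ := {x : ℝ | ∃ n : ℕ, 1 ≤ n ∧ x = 1 / (n : ℝ) ^ k} with hSdef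
    set M : ℕ := max 2 ⌈(k * 2 ^ k : ℝ) / δ⌉₊ with hMdef
    have hM2 : 2 ≤ M := le_max_left _ _
    have hMδ : (k * 2 ^ k : ℝ) ≤ M * δ := by
      have h1 : (k * 2 ^ k : ℝ) / δ ≤ (⌈(k * 2 ^ k : ℝ) / δ⌉₊ : ℝ) := Nat.le_ceil _
      have h2 : ((⌈(k * 2 ^ k : ℝ) / δ⌉₊ : ℕ) : ℝ) ≤ (M : ℝ) :=
        Nat.cast_le.2 (le_max_right _ _)
      calc (k * 2 ^ k : ℝ) = (k * 2 ^ k : ℝ) / δ * δ := by field_simp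
        _ ≤ (M : ℝ) * δ := mul_le_mul_of_nonneg_right (h1.trans h2) hδ.le
    have hMpos : (0:ℝ) < (M:ℝ) ^ k := by positivity
    set r : ℝ := 1 / (2 * (M:ℝ) ^ k) with hrdef
    have hr : 0 < r := by positivity
    have hδr : 0 < δ * r := mul_pos hδ hr
    obtain ⟨q, hq⟩ := h r r hr
    have hqmem : q ∈ Set.Ioo (q - δ * r) (q + δ * r) := ⟨by linarith, by linarith⟩
    obtain ⟨⟨hq1, hq2⟩, -⟩ := hq hqmem
    have hq0 : 0 < q := by linarith
    have hq2r : q < 2 * r := by linarith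
    have h2r : 2 * r = 1 / (M:ℝ) ^ k := by rw [hrdef]; ring
    have h2r1 : 2 * r < 1 := by
      rw [h2r, div_lt_one hMpos]
      have : (2:ℝ) ≤ (M:ℝ) := by exact_mod_cast hM2
      calc (1:ℝ) < 2 := one_lt_two
        _ = 2 ^ 1 := (pow_one 2).symm
        _ ≤ (2:ℝ) ^ k := pow_le_pow_right₀ one_le_two hk
        _ ≤ (M:ℝ) ^ k := pow_le_pow_left₀ (by norm_num) this k
    have hexists : ∃ n : ℕ, 1 ≤ n ∧ 1 / ((n:ℝ)) ^ k ≤ q := by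
      refine ⟨⌈1/q⌉₊, ?_, ?_⟩
      · exact Nat.one_le_ceil_iff.2 (by positivity)
      · set n := ⌈1/q⌉₊ with hndef
        have hn1 : (1:ℝ) ≤ (n:ℝ) := by
          exact_mod_cast Nat.one_le_ceil_iff.2 (show (0:ℝ) < 1/q by positivity)
        have hnq : 1 / q ≤ (n:ℝ) := Nat.le_ceil _
        have hnk : (n:ℝ) ≤ (n:ℝ) ^ k := le_self_pow₀ (by linarith) (by omega)
        have hnkpos : (0:ℝ) < (n:ℝ) ^ k := by positivity
        rw [div_le_iff₀ hnkpos]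
        calc (1:ℝ) = (1/q) * q := by field_simp
          _ ≤ (n:ℝ) * q := mul_le_mul_of_nonneg_right hnq hq0.le
          _ ≤ (n:ℝ)^k * q := mul_le_mul_of_nonneg_right hnk hq0.le
          _ = q * (n:ℝ)^k := by ring
    classical
    obtain ⟨m, hm1, hmq, hmin⟩ : ∃ m : ℕ, 1 ≤ m ∧ 1 / ((m:ℝ)) ^ k ≤ q ∧
        ∀ l : ℕ, 1 ≤ l → l < m → q < 1 / ((l:ℝ)) ^ k := by
      refine ⟨Nat.find hexists, (Nat.find_spec hexists).1, (Nat.find_spec hexists).2, ?_⟩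
      intro l hl1 hlm
      have hh := Nat.find_min hexists hlm
      push_neg at hh
      exact hh hl1
    have hm2 : 2 ≤ m := by
      by_contra hc
      have hm1' : m = 1 := by omega
      rw [hm1'] at hmq
      norm_num at hmq
      linarith
    have hqlt : q < 1 / ((m - 1 : ℕ):ℝ) ^ k := hmin (m-1) (by omega) (by omega)
    set A : ℝ := ((m - 1 : ℕ):ℝ) with hAdef
    have hA1 : (1:ℝ) ≤ A := by
      rw [hAdef]; exact_mod_cast (by omega : 1 ≤ m - 1)
    have hAm : A + 1 = (m:ℝ) := by
      rw [hAdef, Nat.cast_sub (by omega)]; simp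
    have hmS : (1 / ((m:ℝ)) ^ k) ∈ S := ⟨m, by omega, rfl⟩
    have hm1S : (1 / A ^ k) ∈ S := ⟨m - 1, by omega, rfl⟩
    have havoid : ∀ x ∈ S, x ∉ Set.Ioo (q - δ * r) (q + δ * r) := by
      intro x hx hmem
      exact (hq hmem).2 hx
    have hPpos : (0:ℝ) < A ^ k := by positivity
    have hmr : (0:ℝ) < (m:ℝ) := by positivity
    have hQpos : (0:ℝ) < (m:ℝ) ^ k := by positivity
    have hlow : 1 / ((m:ℝ)) ^ k ≤ q - δ * r := by
      have hnot := havoid _ hmS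
      simp only [Set.mem_Ioo, not_and, not_lt] at hnot
      by_contra hc
      push_neg at hc
      have := hnot hc
      linarith
    have hhigh : q + δ * r ≤ 1 / A ^ k := by
      have hnot := havoid _ hm1S
      simp only [Set.mem_Ioo, not_and, not_lt] at hnot
      by_contra hc
      push_neg at hc
      have h1 : q - δ * r < 1 / A ^ k := by linarith
      have := hnot h1
      linarith
    have hgap : 2 * (δ * r) ≤ 1 / A ^ k - 1 / (m:ℝ) ^ k := by linarith
    obtain ⟨j, rfl⟩ : ∃ j, k = j + 1 := ⟨k - 1, by omega⟩
    have hpow := aux_pow j A (by linarith)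
    have hmM : M < m := by
      by_contra hc
      push_neg at hc
      have : (1:ℝ) / (M:ℝ) ^ (j+1) ≤ 1 / (m:ℝ) ^ (j+1) := by
        apply one_div_le_one_div_of_le hQpos
        exact pow_le_pow_left₀ (by positivity) (by exact_mod_cast hc) _
      rw [← h2r] at this
      linarith
    have hδm : (↑(j+1) * 2 ^ (j+1) : ℝ) < δ * (m:ℝ) := by
      have h1 : (M:ℝ) + 1 ≤ (m:ℝ) := by exact_mod_cast hmM
      push_cast at hMδ ⊢
      nlinarith [hδ]
    have hie1 : 2 * (δ * r) * (A ^ (j+1) * (m:ℝ) ^ (j+1)) ≤ (m:ℝ) ^ (j+1) - A ^ (j+1) := by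
      have h1 : (1 / A ^ (j+1) - 1 / (m:ℝ) ^ (j+1)) * (A ^ (j+1) * (m:ℝ) ^ (j+1))
          = (m:ℝ) ^ (j+1) - A ^ (j+1) := by field_simp
      nlinarith [mul_le_mul_of_nonneg_right hgap (le_of_lt (mul_pos hPpos hQpos))]
    have hmA : (m:ℝ) ^ (j+1) = (A+1) ^ (j+1) := by rw [hAm]
    have hie2 : (m:ℝ) ^ (j+1) - A ^ (j+1) ≤ (↑j + 1) * (A+1) ^ j := by
      rw [hmA]; push_cast at hpow ⊢; linarith
    have hie3 : (A + 1) ^ (j+1) ≤ 2 ^ (j+1) * A ^ (j+1) := by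
      have h1 : A + 1 ≤ 2 * A := by linarith
      calc (A + 1) ^ (j+1) ≤ (2 * A) ^ (j+1) := pow_le_pow_left₀ (by linarith) h1 _
        _ = 2 ^ (j+1) * A ^ (j+1) := by rw [mul_pow]
    have hie4 : 1 < (m:ℝ) ^ (j+1) * (2 * r) := by
      have h1 : 1 / (m:ℝ) ^ (j+1) < 2 * r := by linarith
      calc (1:ℝ) = (m:ℝ)^(j+1) * (1 / (m:ℝ)^(j+1)) := by field_simp
        _ < (m:ℝ)^(j+1) * (2*r) := mul_lt_mul_of_pos_left h1 hQpos
    have hA1pos : (0:ℝ) < A + 1 := by linarith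
    have step1 : 2 * (δ * r) * (A ^ (j+1) * (m:ℝ) ^ (j+1)) * (A+1) ≤ (↑j + 1) * (m:ℝ)^(j+1) := by
      have h1 := mul_le_mul_of_nonneg_right (hie1.trans hie2) hA1pos.le
      calc 2 * (δ * r) * (A ^ (j+1) * (m:ℝ) ^ (j+1)) * (A+1)
          ≤ (↑j + 1) * (A+1) ^ j * (A+1) := h1
        _ = (↑j + 1) * (A+1) ^ (j+1) := by ring
        _ = (↑j + 1) * (m:ℝ)^(j+1) := by rw [hmA]
    have step2 : 2 * (δ * r) * A ^ (j+1) * (A+1) ≤ (↑j + 1) := by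
      have h1 := step1
      have h2 : 2 * (δ * r) * (A ^ (j+1) * (m:ℝ) ^ (j+1)) * (A+1)
          = (2 * (δ * r) * A ^ (j+1) * (A+1)) * (m:ℝ)^(j+1) := by ring
      rw [h2] at h1
      exact le_of_mul_le_mul_right h1 hQpos
    have step3 : 2 * (δ * r) * (m:ℝ) ^ (j+1) * (A+1) ≤ (↑j + 1) * 2 ^ (j+1) := by
      rw [hmA]
      nlinarith [mul_le_mul_of_nonneg_left hie3 (by positivity : (0:ℝ) ≤ 2 * (δ * r) * (A+1)), step2]
    have step4 : δ * (A + 1) < (↑j + 1) * 2 ^ (j+1) := by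
      nlinarith [hie4, mul_pos hδ hA1pos, step3, hr]
    rw [hAm] at step4
    push_cast at hδm
    linarith
end

section
/- Let N be a linearly ordered abelian group, a ∈ N with a > 0, let Fin_a be the convex hull of the subgroup ℤ·a, and let Inf_a = {b ∈ N : ∀ n ∈ ℕ, n·|b| < a}. Then Fin_a and Inf_a are convex subgroups of N with Inf_a ⊆ Fin_a, and the map st_a : Fin_a → ℝ given by st_a(b) = sup{m/n ∈ ℚ : m·a ≤ n·b, n > 0} is an ordered group homomorphism with kernel Inf_a and st_a(a) = 1. -/
/-- Let `N` be a linearly ordered abelian group and `a > 0`.  Let `Fin_a` be the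
convex hull of `ℤ·a`, `Inf_a = {b : ∀ n, n·|b| < a}`, and
`st_a b = sup {m/n : m·a ≤ n·b, n > 0}` (computed in ℝ).  Then `Fin_a` and
`Inf_a` are convex subgroups with `Inf_a ⊆ Fin_a`, and `st_a` is, on `Fin_a`, a
monotone (ordered) group homomorphism with kernel `Inf_a` and `st_a a = 1`. -/
theorem stmt9 {N : Type*} [AddCommGroup N] [LinearOrder N] [IsOrderedAddMonoid N] (a : N) (ha : 0 < a)
    (FinA InfA : Set N)
    (hFin : FinA = {x : N | ∃ m m' : ℤ, m • a ≤ x ∧ x ≤ m' • a})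
    (hInf : InfA = {b : N | ∀ n : ℕ, n • |b| < a})
    (st : N → ℝ)
    (hst : ∀ b : N, st b = sSup {q : ℝ | ∃ (m : ℤ) (n : ℕ), 0 < n ∧
      q = (m : ℝ) / (n : ℝ) ∧ m • a ≤ (n : ℤ) • b}) :
    (0 ∈ FinA) ∧ (∀ x ∈ FinA, -x ∈ FinA) ∧
      (∀ x ∈ FinA, ∀ y ∈ FinA, x + y ∈ FinA) ∧
      (∀ x ∈ FinA, ∀ y ∈ FinA, ∀ z : N, x ≤ z → z ≤ y → z ∈ FinA) ∧
      (0 ∈ InfA) ∧ (∀ x ∈ InfA, -x ∈ InfA) ∧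
      (∀ x ∈ InfA, ∀ y ∈ InfA, x + y ∈ InfA) ∧
      (∀ x ∈ InfA, ∀ y ∈ InfA, ∀ z : N, x ≤ z → z ≤ y → z ∈ InfA) ∧
      InfA ⊆ FinA ∧
      (∀ b ∈ FinA, ∀ c ∈ FinA, st (b + c) = st b + st c) ∧
      (∀ b ∈ FinA, ∀ c ∈ FinA, b ≤ c → st b ≤ st c) ∧
      (∀ b ∈ FinA, (st b = 0 ↔ b ∈ InfA)) ∧
      st a = 1 := by
  subst hFin hInf
  set S : N → Set ℝ := fun b => {q : ℝ | ∃ (m : ℤ) (n : ℕ), 0 < n ∧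
      q = (m : ℝ) / (n : ℝ) ∧ m • a ≤ (n : ℤ) • b} with hS
  -- conversion ℕ-smul to ℤ-smul
  have hconv : ∀ (n : ℕ) (x : N), n • x = (n : ℤ) • x := fun n x => (natCast_zsmul x n).symm
  have hmem : ∀ (b : N) (m : ℤ) (n : ℕ), 0 < n → m • a ≤ (n : ℤ) • b →
      ((m : ℝ) / (n : ℝ)) ∈ S b := fun b m n h1 h2 => ⟨m, n, h1, rfl, h2⟩
  have hne : ∀ b : N, (∃ m : ℤ, m • a ≤ b) → (S b).Nonempty := by
    rintro b ⟨m, hm⟩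
    exact ⟨(m : ℝ) / ((1 : ℕ) : ℝ), hmem b m 1 one_pos (by simpa using hm)⟩
  have hub : ∀ (b : N) (m' : ℤ), b ≤ m' • a → ∀ q ∈ S b, q ≤ (m' : ℝ) := by
    rintro b m' hb q ⟨m, n, hn, rfl, hma⟩
    have h1 : (n : ℤ) • b ≤ (n : ℤ) • (m' • a) :=
      zsmul_le_zsmul_right (Int.natCast_nonneg n) hb
    have h2 : m • a ≤ ((n : ℤ) * m') • a := by
      rw [mul_zsmul]; exact hma.trans h1
    have h3 : m ≤ (n : ℤ) * m' := (zsmul_le_zsmul_iff_left ha).1 h2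
    have hn' : (0 : ℝ) < (n : ℝ) := by exact_mod_cast hn
    rw [div_le_iff₀ hn']
    have : (m : ℝ) ≤ (n : ℝ) * (m' : ℝ) := by exact_mod_cast h3
    linarith
  have hbdd : ∀ b : N, (∃ m' : ℤ, b ≤ m' • a) → BddAbove (S b) := by
    rintro b ⟨m', h⟩
    exact ⟨(m' : ℝ), fun q hq => hub b m' h q hq⟩
  -- FinA facts
  have F0 : (0 : N) ∈ {x : N | ∃ m m' : ℤ, m • a ≤ x ∧ x ≤ m' • a} :=
    ⟨0, 0, by simp, by simp⟩
  have Fneg : ∀ x ∈ {x : N | ∃ m m' : ℤ, m • a ≤ x ∧ x ≤ m' • a},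
      -x ∈ {x : N | ∃ m m' : ℤ, m • a ≤ x ∧ x ≤ m' • a} := by
    rintro x ⟨m, m', h1, h2⟩
    exact ⟨-m', -m, by rw [neg_zsmul]; exact neg_le_neg h2,
      by rw [neg_zsmul]; exact neg_le_neg h1⟩
  have Fadd : ∀ x ∈ {x : N | ∃ m m' : ℤ, m • a ≤ x ∧ x ≤ m' • a},
      ∀ y ∈ {x : N | ∃ m m' : ℤ, m • a ≤ x ∧ x ≤ m' • a},
      x + y ∈ {x : N | ∃ m m' : ℤ, m • a ≤ x ∧ x ≤ m' • a} := by
    rintro x ⟨m1, m1', h1, h1'⟩ y ⟨m2, m2', h2, h2'⟩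
    exact ⟨m1 + m2, m1' + m2', by rw [add_zsmul]; exact add_le_add h1 h2,
      by rw [add_zsmul]; exact add_le_add h1' h2'⟩
  have Fconv : ∀ x ∈ {x : N | ∃ m m' : ℤ, m • a ≤ x ∧ x ≤ m' • a},
      ∀ y ∈ {x : N | ∃ m m' : ℤ, m • a ≤ x ∧ x ≤ m' • a},
      ∀ z : N, x ≤ z → z ≤ y → z ∈ {x : N | ∃ m m' : ℤ, m • a ≤ x ∧ x ≤ m' • a} := by
    rintro x ⟨m1, _, h1, _⟩ y ⟨_, m2', _, h2'⟩ z hxz hzy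
    exact ⟨m1, m2', h1.trans hxz, hzy.trans h2'⟩
  -- InfA facts
  have I0 : (0 : N) ∈ {b : N | ∀ n : ℕ, n • |b| < a} := by
    intro n; simpa using ha
  have Ineg : ∀ x ∈ {b : N | ∀ n : ℕ, n • |b| < a},
      -x ∈ {b : N | ∀ n : ℕ, n • |b| < a} := by
    intro x hx n; simpa [abs_neg] using hx n
  have Iadd : ∀ x ∈ {b : N | ∀ n : ℕ, n • |b| < a}, ∀ y ∈ {b : N | ∀ n : ℕ, n • |b| < a},
      x + y ∈ {b : N | ∀ n : ℕ, n • |b| < a} := by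
    intro x hx y hy n
    have habs : |x + y| ≤ |x| + |y| := abs_add_le x y
    have key : ∀ u v : N, |u + v| ≤ |u| + |v| → |u| ≤ |v| →
        (∀ k : ℕ, k • |v| < a) → n • |u + v| < a := by
      intro u v h1 h2 hv
      have h3 : (n : ℤ) • |u + v| ≤ (n : ℤ) • (|v| + |v|) :=
        zsmul_le_zsmul_right (Int.natCast_nonneg n)
          (h1.trans (add_le_add_left h2 _))
      have h4 : (2 * n : ℕ) • |v| = (n : ℤ) • (|v| + |v|) := by
        rw [hconv, smul_add]
        push_cast
        rw [two_mul, add_zsmul]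
      calc n • |u + v| = (n : ℤ) • |u + v| := hconv n _
        _ ≤ (n : ℤ) • (|v| + |v|) := h3
        _ = (2 * n : ℕ) • |v| := h4.symm
        _ < a := hv (2 * n)
    rcases le_total |x| |y| with h | h
    · exact key x y habs h hy
    · rw [add_comm x y]
      exact key y x (abs_add_le y x) h hx
  have Iconv : ∀ x ∈ {b : N | ∀ n : ℕ, n • |b| < a}, ∀ y ∈ {b : N | ∀ n : ℕ, n • |b| < a},
      ∀ z : N, x ≤ z → z ≤ y → z ∈ {b : N | ∀ n : ℕ, n • |b| < a} := by
    intro x hx y hy z hxz hzy n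
    have h1 : |z| ≤ max |x| |y| := by
      rw [abs_le]
      constructor
      · calc -(max |x| |y|) ≤ -|x| := neg_le_neg (le_max_left _ _)
          _ ≤ x := neg_abs_le x
          _ ≤ z := hxz
      · calc z ≤ y := hzy
          _ ≤ |y| := le_abs_self y
          _ ≤ max |x| |y| := le_max_right _ _
    have h2 : (n : ℤ) • |z| ≤ (n : ℤ) • max |x| |y| :=
      zsmul_le_zsmul_right (Int.natCast_nonneg n) h1
    rcases max_choice |x| |y| with h | h
    · calc n • |z| = (n : ℤ) • |z| := hconv n _
        _ ≤ (n : ℤ) • max |x| |y| := h2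
        _ = n • |x| := by rw [h, ← hconv]
        _ < a := hx n
    · calc n • |z| = (n : ℤ) • |z| := hconv n _
        _ ≤ (n : ℤ) • max |x| |y| := h2
        _ = n • |y| := by rw [h, ← hconv]
        _ < a := hy n
  have ISubF : {b : N | ∀ n : ℕ, n • |b| < a} ⊆ {x : N | ∃ m m' : ℤ, m • a ≤ x ∧ x ≤ m' • a} := by
    intro b hb
    have h1 : |b| < a := by simpa using hb 1
    refine ⟨-1, 1, ?_, ?_⟩
    · rw [neg_one_zsmul]
      calc -a ≤ -|b| := neg_le_neg h1.le
        _ ≤ b := neg_abs_le b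
    · rw [one_zsmul]
      exact (le_abs_self b).trans h1.le
  -- existence/boundedness on FinA
  have hneF : ∀ b ∈ {x : N | ∃ m m' : ℤ, m • a ≤ x ∧ x ≤ m' • a}, (S b).Nonempty := by
    rintro b ⟨m, m', h1, h2⟩; exact hne b ⟨m, h1⟩
  have hbddF : ∀ b ∈ {x : N | ∃ m m' : ℤ, m • a ≤ x ∧ x ≤ m' • a}, BddAbove (S b) := by
    rintro b ⟨m, m', h1, h2⟩; exact hbdd b ⟨m', h2⟩
  -- monotonicity
  have hmono : ∀ b ∈ {x : N | ∃ m m' : ℤ, m • a ≤ x ∧ x ≤ m' • a},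
      ∀ c ∈ {x : N | ∃ m m' : ℤ, m • a ≤ x ∧ x ≤ m' • a}, b ≤ c → st b ≤ st c := by
    intro b hb c hc hbc
    rw [hst, hst]
    refine csSup_le_csSup (hbddF c hc) (hneF b hb) ?_
    rintro q ⟨m, n, hn, rfl, h⟩
    exact ⟨m, n, hn, rfl, h.trans (zsmul_le_zsmul_right (Int.natCast_nonneg n) hbc)⟩
  -- additivity
  have hadd : ∀ b ∈ {x : N | ∃ m m' : ℤ, m • a ≤ x ∧ x ≤ m' • a},
      ∀ c ∈ {x : N | ∃ m m' : ℤ, m • a ≤ x ∧ x ≤ m' • a}, st (b + c) = st b + st c := by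
    intro b hb c hc
    have hbc := Fadd b hb c hc
    rw [hst, hst, hst]
    have hsum : ∀ q1 ∈ S b, ∀ q2 ∈ S c, q1 + q2 ∈ S (b + c) := by
      rintro _ ⟨m1, n1, hn1, rfl, h1⟩ _ ⟨m2, n2, hn2, rfl, h2⟩
      refine ⟨m1 * n2 + m2 * n1, n1 * n2, Nat.mul_pos hn1 hn2, ?_, ?_⟩
      · have e1 : ((n1 : ℝ)) ≠ 0 := by positivity
        have e2 : ((n2 : ℝ)) ≠ 0 := by positivity
        push_cast
        field_simp
      · calc (m1 * (n2 : ℤ) + m2 * (n1 : ℤ)) • a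
            = (n2 : ℤ) • (m1 • a) + (n1 : ℤ) • (m2 • a) := by module
          _ ≤ (n2 : ℤ) • ((n1 : ℤ) • b) + (n1 : ℤ) • ((n2 : ℤ) • c) :=
              add_le_add (zsmul_le_zsmul_right (Int.natCast_nonneg n2) h1)
                (zsmul_le_zsmul_right (Int.natCast_nonneg n1) h2)
          _ = ((n1 * n2 : ℕ) : ℤ) • (b + c) := by push_cast; module
    have hnebc := hneF _ hbc
    have hbddbc := hbddF _ hbc
    have hneb := hneF b hb
    have hnec := hneF c hc
    refine le_antisymm ?_ ?_
    · -- upper bound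
      apply le_of_forall_pos_le_add
      intro ε hε
      obtain ⟨r, hr1, hr2⟩ := exists_rat_btwn (lt_add_of_pos_right (sSup (S b)) (half_pos hε))
      obtain ⟨s, hs1, hs2⟩ := exists_rat_btwn (lt_add_of_pos_right (sSup (S c)) (half_pos hε))
      have hrb : (r.den : ℤ) • b < r.num • a := by
        by_contra h
        push_neg at h
        have : (r : ℝ) ∈ S b := by
          rw [Rat.cast_def]; exact hmem b r.num r.den r.pos h
        exact absurd (le_csSup (hbddF b hb) this) (not_le.2 hr1)
      have hsc : (s.den : ℤ) • c < s.num • a := by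
        by_contra h
        push_neg at h
        have : (s : ℝ) ∈ S c := by
          rw [Rat.cast_def]; exact hmem c s.num s.den s.pos h
        exact absurd (le_csSup (hbddF c hc) this) (not_le.2 hs1)
      have hrdpos : (0 : ℤ) < (r.den : ℤ) := by exact_mod_cast r.pos
      have hsdpos : (0 : ℤ) < (s.den : ℤ) := by exact_mod_cast s.pos
      have key : ∀ q ∈ S (b + c), q ≤ (r : ℝ) + (s : ℝ) := by
        rintro _ ⟨m, n, hn, rfl, hm⟩
        have hnpos : (0 : ℤ) < (n : ℤ) := by exact_mod_cast hn
        have h1 : ((r.den : ℤ) * (s.den : ℤ)) • (b + c)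
            < (r.num * (s.den : ℤ) + s.num * (r.den : ℤ)) • a := by
          calc ((r.den : ℤ) * (s.den : ℤ)) • (b + c)
              = (s.den : ℤ) • ((r.den : ℤ) • b) + (r.den : ℤ) • ((s.den : ℤ) • c) := by
                module
            _ < (s.den : ℤ) • (r.num • a) + (r.den : ℤ) • (s.num • a) :=
                add_lt_add (zsmul_lt_zsmul_right hsdpos hrb)
                  (zsmul_lt_zsmul_right hrdpos hsc)
            _ = (r.num * (s.den : ℤ) + s.num * (r.den : ℤ)) • a := by module
        have h2 : (m * ((r.den : ℤ) * (s.den : ℤ))) • a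
            < ((n : ℤ) * (r.num * (s.den : ℤ) + s.num * (r.den : ℤ))) • a := by
          calc (m * ((r.den : ℤ) * (s.den : ℤ))) • a
              = ((r.den : ℤ) * (s.den : ℤ)) • (m • a) := by module
            _ ≤ ((r.den : ℤ) * (s.den : ℤ)) • ((n : ℤ) • (b + c)) :=
                zsmul_le_zsmul_right (by positivity) hm
            _ = (n : ℤ) • (((r.den : ℤ) * (s.den : ℤ)) • (b + c)) := smul_comm _ _ _
            _ < (n : ℤ) • ((r.num * (s.den : ℤ) + s.num * (r.den : ℤ)) • a) :=
                zsmul_lt_zsmul_right hnpos h1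
            _ = ((n : ℤ) * (r.num * (s.den : ℤ) + s.num * (r.den : ℤ))) • a := by
                module
        have h3 : m * ((r.den : ℤ) * (s.den : ℤ))
            < (n : ℤ) * (r.num * (s.den : ℤ) + s.num * (r.den : ℤ)) :=
          (zsmul_lt_zsmul_iff_left ha).1 h2
        have hnR : (0 : ℝ) < (n : ℝ) := by exact_mod_cast hn
        have hrdR : (0 : ℝ) < (r.den : ℝ) := by exact_mod_cast r.pos
        have hsdR : (0 : ℝ) < (s.den : ℝ) := by exact_mod_cast s.pos
        have h3R : (m : ℝ) * ((r.den : ℝ) * (s.den : ℝ))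
            < (n : ℝ) * ((r.num : ℝ) * (s.den : ℝ) + (s.num : ℝ) * (r.den : ℝ)) := by
          exact_mod_cast h3
        rw [Rat.cast_def, Rat.cast_def, div_le_iff₀ hnR]
        rw [div_add_div _ _ (ne_of_gt hrdR) (ne_of_gt hsdR)]
        rw [div_mul_eq_mul_div, le_div_iff₀ (by positivity)]
        nlinarith
      calc sSup (S (b + c)) ≤ (r : ℝ) + (s : ℝ) := csSup_le hnebc key
        _ ≤ sSup (S b) + sSup (S c) + ε := by linarith
    · -- lower bound
      have hall : ∀ q1 ∈ S b, ∀ q2 ∈ S c, q1 + q2 ≤ sSup (S (b + c)) :=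
        fun q1 h1 q2 h2 => le_csSup hbddbc (hsum q1 h1 q2 h2)
      have l1 : sSup (S b) ≤ sSup (S (b + c)) - sSup (S c) := by
        refine csSup_le hneb fun q1 hq1 => ?_
        have l2 : sSup (S c) ≤ sSup (S (b + c)) - q1 :=
          csSup_le hnec fun q2 hq2 => by linarith [hall q1 hq1 q2 hq2]
        linarith
      linarith
  -- kernel
  have hker : ∀ b ∈ {x : N | ∃ m m' : ℤ, m • a ≤ x ∧ x ≤ m' • a},
      (st b = 0 ↔ b ∈ {b : N | ∀ n : ℕ, n • |b| < a}) := by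
    intro b hb
    have hsup : sSup (S b) = st b := (hst b).symm
    constructor
    · intro h0 n
      rcases Nat.eq_zero_or_pos n with hn | hn
      · simpa [hn] using ha
      by_contra hcon
      push_neg at hcon
      have hnpos : (0 : ℤ) < (n : ℤ) := by exact_mod_cast hn
      have hnR : (0 : ℝ) < (n : ℝ) := by exact_mod_cast hn
      rcases abs_choice b with hab | hab
      · rw [hab, hconv] at hcon
        have hmem1 : ((1 : ℤ) : ℝ) / (n : ℝ) ∈ S b :=
          hmem b 1 n hn (by rw [one_zsmul]; exact hcon)
        have h1 := le_csSup (hbddF b hb) hmem1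
        rw [hsup, h0] at h1
        have h2 : (0:ℝ) < ((1 : ℤ) : ℝ) / (n : ℝ) := by positivity
        linarith
      · rw [hab, hconv] at hcon
        have hnb : (n : ℤ) • b ≤ -a := by
          rw [smul_neg] at hcon
          exact le_neg.1 hcon
        have hub2 : ∀ q ∈ S b, q ≤ (((-1 : ℤ)) : ℝ) / (n : ℝ) := by
          rintro _ ⟨m, k, hk, rfl, hmk⟩
          have hkpos : (0 : ℤ) < (k : ℤ) := by exact_mod_cast hk
          have hkR : (0 : ℝ) < (k : ℝ) := by exact_mod_cast hk
          have c1 : ((n : ℤ) * m) • a ≤ ((n : ℤ)) • ((k : ℤ) • b) := by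
            rw [mul_zsmul]
            exact zsmul_le_zsmul_right hnpos.le hmk
          have c2 : (n : ℤ) • ((k : ℤ) • b) ≤ (k : ℤ) • (-a) := by
            rw [smul_comm]
            exact zsmul_le_zsmul_right hkpos.le hnb
          have c3 : ((n : ℤ) * m) • a ≤ (-(k : ℤ)) • a := by
            rw [neg_zsmul]
            calc ((n : ℤ) * m) • a ≤ (n : ℤ) • ((k : ℤ) • b) := c1
              _ ≤ (k : ℤ) • (-a) := c2
              _ = -((k : ℤ) • a) := smul_neg _ _
          have c4 : (n : ℤ) * m ≤ -(k : ℤ) := (zsmul_le_zsmul_iff_left ha).1 c3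
          have c5 : (n : ℝ) * (m : ℝ) ≤ -(k : ℝ) := by exact_mod_cast c4
          rw [div_le_div_iff₀ hkR hnR]
          push_cast
          nlinarith
        have h1 := csSup_le (hneF b hb) hub2
        rw [hsup, h0] at h1
        have h2 : (((-1 : ℤ)) : ℝ) / (n : ℝ) < 0 :=
          div_neg_of_neg_of_pos (by norm_num) hnR
        linarith
    · intro hbI
      rw [hst]
      have ub0 : ∀ q ∈ S b, q ≤ 0 := by
        rintro _ ⟨m, n, hn, rfl, hmn⟩
        have hnR : (0 : ℝ) < (n : ℝ) := by exact_mod_cast hn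
        rcases le_or_gt m 0 with hm | hm
        · apply div_nonpos_of_nonpos_of_nonneg
          · exact_mod_cast hm
          · exact hnR.le
        · exfalso
          have h1 : (1 : ℤ) • a ≤ m • a := zsmul_le_zsmul_left ha.le hm
          rw [one_zsmul] at h1
          have h2 : (n : ℤ) • b ≤ (n : ℤ) • |b| :=
            zsmul_le_zsmul_right (Int.natCast_nonneg n) (le_abs_self b)
          have h3 : (n : ℤ) • |b| < a := by rw [← hconv]; exact hbI n
          exact absurd (hmn.trans h2) (not_le.2 (h3.trans_le h1))
      have lb0 : ∀ k : ℕ, 0 < k → ((-1 : ℤ) : ℝ) / (k : ℝ) ≤ sSup (S b) := by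
        intro k hk
        refine le_csSup (hbddF b hb) (hmem b (-1) k hk ?_)
        have h1 : (k : ℤ) • (-b) ≤ (k : ℤ) • |b| :=
          zsmul_le_zsmul_right (Int.natCast_nonneg k) (neg_le_abs b)
        have h2 : (k : ℤ) • |b| < a := by rw [← hconv]; exact hbI k
        have h3 : -((k : ℤ) • b) ≤ a := by
          rw [← smul_neg]
          exact (h1.trans h2.le)
        rw [neg_one_zsmul]
        exact neg_le.1 h3
      have lb : (0 : ℝ) ≤ sSup (S b) := by
        by_contra hneg
        push_neg at hneg
        obtain ⟨k, hk⟩ := exists_nat_gt (1 / (-(sSup (S b))))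
        have hpos : (0:ℝ) < 1 / (-(sSup (S b))) := by
          apply div_pos one_pos; linarith
        have hkR : (0 : ℝ) < (k : ℝ) := hpos.trans hk
        have hkN : 0 < k := by exact_mod_cast hkR
        have h1 := lb0 k hkN
        have h2 : ((-1 : ℤ) : ℝ) / (k : ℝ) = -(1 / (k:ℝ)) := by push_cast; ring
        have h3 : 1 / (k:ℝ) < -(sSup (S b)) := by
          rw [div_lt_iff₀ hkR]
          rw [div_lt_iff₀ (by linarith : (0:ℝ) < -(sSup (S b)))] at hk
          nlinarith
        rw [h2] at h1
        linarith
      exact le_antisymm (csSup_le (hneF b hb) ub0) lb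
  -- st a = 1
  have haF : a ∈ {x : N | ∃ m m' : ℤ, m • a ≤ x ∧ x ≤ m' • a} :=
    ⟨1, 1, (one_zsmul a).le, (one_zsmul a).ge⟩
  have hsta : st a = 1 := by
    rw [hst]
    refine le_antisymm (csSup_le (hneF a haF) ?_) (le_csSup (hbddF a haF) ?_)
    · rintro _ ⟨m, n, hn, rfl, h⟩
      have hnR : (0 : ℝ) < (n : ℝ) := by exact_mod_cast hn
      have h1 : m ≤ (n : ℤ) := (zsmul_le_zsmul_iff_left ha).1 h
      rw [div_le_one hnR]
      exact_mod_cast h1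
    · exact ⟨1, 1, one_pos, by norm_num, by simp⟩
  exact ⟨F0, Fneg, Fadd, Fconv, I0, Ineg, Iadd, Iconv, ISubF, hadd, hmono, hker, hsta⟩
end

section
/- Let Y ⊆ ℝ be a nonempty finite-Cantor-Bendixson-rank subset and X ⊆ Y. If the Cantor–Bendixson rank of X equals the Cantor–Bendixson rank of Y, then X has nonempty interior in Y (with the subspace topology on Y). -/
/-- The Cantor–Bendixson derivative of a subset of ℝ: the set of its points
which are accumulation points of it (i.e. non-isolated points, equivalently
for the subspace topology). -/
def cbDeriv (A : Set ℝ) : Set ℝ := {x ∈ A | AccPt x (Filter.principal A)}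

lemma cbDeriv_mono {A B : Set ℝ} (h : A ⊆ B) : cbDeriv A ⊆ cbDeriv B := by
  rintro x ⟨hxA, hacc⟩
  exact ⟨h hxA, hacc.mono (Filter.principal_mono.2 h)⟩

lemma cbDeriv_iter_mono (n : ℕ) {A B : Set ℝ} (h : A ⊆ B) :
    cbDeriv^[n] A ⊆ cbDeriv^[n] B := by
  induction n generalizing A B with
  | zero => exact h
  | succ n ih =>
    rw [Function.iterate_succ_apply, Function.iterate_succ_apply]
    exact ih (cbDeriv_mono h)

/-- If `Y ⊆ ℝ` is nonempty of finite Cantor–Bendixson rank `r`, `X ⊆ Y`, and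
the Cantor–Bendixson rank of `X` also equals `r`, then `X` has nonempty
interior in `Y` (for the subspace topology on `Y`). -/
theorem stmt19 (X Y : Set ℝ) (hXY : X ⊆ Y) (hYne : Y.Nonempty) (r : ℕ)
    (hY0 : cbDeriv^[r] Y = ∅) (hYmin : ∀ m : ℕ, cbDeriv^[m] Y = ∅ → r ≤ m)
    (hX0 : cbDeriv^[r] X = ∅) (hXmin : ∀ m : ℕ, cbDeriv^[m] X = ∅ → r ≤ m) :
    ∃ U : Set ℝ, IsOpen U ∧ (U ∩ Y).Nonempty ∧ U ∩ Y ⊆ X := by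
  by_contra hcon
  push_neg at hcon
  obtain ⟨s, hs⟩ : ∃ s, r = s + 1 := by
    cases r with
    | zero => exact absurd hY0 hYne.ne_empty
    | succ s => exact ⟨s, rfl⟩
  have hXsub : X ⊆ cbDeriv Y := by
    intro x hx
    refine ⟨hXY hx, ?_⟩
    rw [accPt_iff_nhds]
    intro U hU
    obtain ⟨V, hVU, hVopen, hxV⟩ := mem_nhds_iff.1 hU
    obtain ⟨y, hyV, hyX⟩ := Set.not_subset.1 (hcon V hVopen ⟨x, hxV, hXY hx⟩)
    exact ⟨y, ⟨hVU hyV.1, hyV.2⟩, fun h => hyX (h ▸ hx)⟩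
  have h1 : cbDeriv^[s] X ⊆ cbDeriv^[s] (cbDeriv Y) := cbDeriv_iter_mono s hXsub
  have h2 : cbDeriv^[s] (cbDeriv Y) = cbDeriv^[r] Y := by
    rw [hs, Function.iterate_succ_apply]
  rw [h2, hY0] at h1
  have := hXmin s (Set.subset_empty_iff.1 h1)
  omega
end
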